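/- arXiv:2604.15300 — 3 statements merged into one kernel-verified Lean document; each statement's English description precedes it below -/
import Mathlib

section
/- Let n ≥ 2. Let μ be the uniform probability measure on (0, π/2)^{n-1}, i.e. the measure with constant density (2/π)^{n-1} with respect to Lebesgue measure on (0, π/2)^{n-1}. Let T : (0, π/2)^{n-1} → ℝ^{n-1} be the map with components T(φ)_k = cos²(φ_k)·∏_{j=1}^{k-1} sin²(φ_j). Then the pushforward measure T_*μ is absolutely continuous with respect to Lebesgue measure on ℝ^{n-1}, with density p(λ₁, …, λ_{n-1}) = π^{-(n-1)} · ∏_{k=1}^{n-1} 1/√(λ_k · (1 − ∑_{i=1}^{k} λ_i)) on the open region {λ ∈ ℝ^{n-1} : λ_i > 0 for all i and ∑_{i=1}^{n-1} λ_i < 1}, and density 0 outside this region. -/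
/-!
`TMap` is stick breaking `c ↦ (c k * ∏_{j<k} (1 - c j))_k` applied to `c k = cos² (φ k)`.
Stick breaking maps `(0,1)^m` bijectively onto the open simplex, with inverse
`λ ↦ (λ k / (1 - ∑_{i<k} λ i))_k`, and `1 - ∑_{i≤k} λ i = ∏_{j≤k} (1 - c j)`.
Coordinate `k` of `TMap` depends only on `φ 0, …, φ k`, so its Jacobian is lower triangular,
with diagonal entries `-2 sin (φ k) cos (φ k) ∏_{j<k} sin² (φ j) = -2 √(λ k (1 - ∑_{i≤k} λ i))`.
The change of variables formula then turns the constant density `(2/π)^m` into the stated one.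
-/

open MeasureTheory Real

/-- The map sending the spherical coordinates to the first `m` squared Cartesian
coordinates (the eigenvalues): `(TMap m φ) k = cos²(φ k) ∏_{j<k} sin²(φ j)`. -/
noncomputable def TMap (m : ℕ) (φ : Fin m → ℝ) : Fin m → ℝ := fun k =>
  Real.cos (φ k) ^ 2 * ∏ j ∈ Finset.univ.filter (fun j : Fin m => j < k), Real.sin (φ j) ^ 2

open Finset Function

section StickBreaking

variable {K ι : Type*} [CommRing K] [LinearOrder ι] [LocallyFiniteOrderBot ι]

def stickBreaking (c : ι → K) : ι → K := fun k => c k * ∏ j ∈ Iio k, (1 - c j)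

theorem one_sub_sum_stickBreaking_of_isLowerSet (c : ι → K) {s : Finset ι}
    (hs : IsLowerSet (s : Set ι)) :
    1 - ∑ i ∈ s, stickBreaking c i = ∏ i ∈ s, (1 - c i) := by
  rw [prod_one_sub_ordered]
  congr 1
  refine sum_congr rfl fun i hi => ?_
  rw [stickBreaking, filter_congr_decidable]
  congr 2
  ext j
  simpa using fun hji : j < i => hs hji.le hi

theorem one_sub_sum_Iio_stickBreaking (c : ι → K) (k : ι) :
    1 - ∑ i ∈ Iio k, stickBreaking c i = ∏ j ∈ Iio k, (1 - c j) :=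
  one_sub_sum_stickBreaking_of_isLowerSet c (by rw [coe_Iio]; exact isLowerSet_Iio k)

theorem stickBreaking_eq_mul_one_sub_sum (c : ι → K) (k : ι) :
    stickBreaking c k = c k * (1 - ∑ i ∈ Iio k, stickBreaking c i) := by
  rw [one_sub_sum_Iio_stickBreaking, stickBreaking]

theorem eq_stickBreaking_of_eq_mul_one_sub_sum [WellFoundedLT ι] {c l : ι → K}
    (h : ∀ k, l k = c k * (1 - ∑ i ∈ Iio k, l i)) : l = stickBreaking c := by
  funext k
  induction k using WellFoundedLT.induction with
  | ind k ih =>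
    rw [h, stickBreaking_eq_mul_one_sub_sum, sum_congr rfl fun i hi => ih i (mem_Iio.mp hi)]

theorem injOn_stickBreaking [IsDomain K] :
    Set.InjOn (stickBreaking (K := K) (ι := ι)) {c | ∀ k, c k ≠ 1} := by
  intro c hc d hd hcd
  funext k
  have hprod : ∏ j ∈ Iio k, (1 - c j) = ∏ j ∈ Iio k, (1 - d j) := by
    rw [← one_sub_sum_Iio_stickBreaking, ← one_sub_sum_Iio_stickBreaking, hcd]
  have hne : ∏ j ∈ Iio k, (1 - c j) ≠ 0 :=
    prod_ne_zero_iff.mpr fun j _ => sub_ne_zero.mpr (hc j).symm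
  have := congrFun hcd k
  rw [stickBreaking, stickBreaking, ← hprod] at this
  exact mul_right_cancel₀ hne this

end StickBreaking

section StickBreakingImage

variable {K ι : Type*} [Field K] [LinearOrder K] [IsStrictOrderedRing K]
  [Fintype ι] [LinearOrder ι] [LocallyFiniteOrderBot ι]

theorem stickBreaking_image_univ_pi_Ioo :
    stickBreaking '' Set.univ.pi (fun _ : ι => Set.Ioo (0 : K) 1) =
      {l | (∀ i, 0 < l i) ∧ ∑ i, l i < 1} := by
  apply Set.Subset.antisymm
  · rintro _ ⟨c, hc, rfl⟩
    have hc' : ∀ i, 0 < c i ∧ c i < 1 := fun i => hc i (Set.mem_univ i)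
    have hprod : ∀ s : Finset ι, 0 < ∏ j ∈ s, (1 - c j) :=
      fun s => prod_pos fun j _ => sub_pos.mpr (hc' j).2
    refine ⟨fun i => mul_pos (hc' i).1 (hprod _), ?_⟩
    have := one_sub_sum_stickBreaking_of_isLowerSet c (s := univ)
      (by rw [coe_univ]; exact isLowerSet_univ)
    linarith [hprod univ]
  · rintro l ⟨hpos, hsum⟩
    have hlt : ∀ k, l k < 1 - ∑ i ∈ Iio k, l i := fun k => by
      have : ∑ i ∈ Iic k, l i ≤ ∑ i, l i :=
        sum_le_sum_of_subset_of_nonneg (subset_univ _) fun i _ _ => (hpos i).le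
      rw [← Iio_insert, sum_insert notMem_Iio_self] at this
      linarith
    have hR : ∀ k, 0 < 1 - ∑ i ∈ Iio k, l i := fun k => (hpos k).trans (hlt k)
    refine ⟨fun k => l k / (1 - ∑ i ∈ Iio k, l i), fun k _ => ⟨div_pos (hpos k) (hR k),
      (div_lt_one (hR k)).mpr (hlt k)⟩, ?_⟩
    exact (eq_stickBreaking_of_eq_mul_one_sub_sum fun k =>
      (div_mul_cancel₀ _ (hR k).ne').symm).symm

end StickBreakingImage

section TriangularJacobian

variable {𝕜 ι : Type*} [NontriviallyNormedField 𝕜] [Fintype ι] [DecidableEq ι]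
  {f : (ι → 𝕜) → ι → 𝕜} {x : ι → 𝕜}

theorem DifferentiableAt.hasDerivAt_comp_update (hf : DifferentiableAt 𝕜 f x) (j : ι) :
    HasDerivAt (fun t => f (update x j t)) (fderiv 𝕜 f x (Pi.single j 1)) (x j) :=
  hf.hasFDerivAt.comp_hasDerivAt_of_eq (x j) (hasDerivAt_update x j (x j))
    (update_eq_self j x).symm

theorem det_fderiv_eq_prod_deriv_of_triangular [LinearOrder ι] (hf : DifferentiableAt 𝕜 f x)
    (htri : ∀ k j, k < j → ∀ t, f (update x j t) k = f x k) :
    (fderiv 𝕜 f x).det = ∏ k, deriv (fun t => f (update x k t) k) (x k) := by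
  have hentry : ∀ k j, LinearMap.toMatrix' (fderiv 𝕜 f x : (ι → 𝕜) →ₗ[𝕜] ι → 𝕜) k j =
      deriv (fun t => f (update x j t) k) (x j) := fun k j =>
    ((hasDerivAt_pi.mp (hf.hasDerivAt_comp_update j)) k).deriv.symm
  rw [ContinuousLinearMap.det, ← LinearMap.det_toMatrix', Matrix.det_of_isLowerTriangular]
  · exact prod_congr rfl fun k _ => hentry k k
  · intro k j hkj
    rw [hentry]
    simp only [htri k j hkj, deriv_const]

end TriangularJacobian

theorem strictAntiOn_cos_sq : StrictAntiOn (fun x => cos x ^ 2) (Set.Icc 0 (π / 2)) :=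
  fun x hx y hy hxy => pow_lt_pow_left₀
    (strictAntiOn_cos ⟨hx.1, by linarith [hx.2, pi_pos]⟩ ⟨hy.1, by linarith [hy.2, pi_pos]⟩ hxy)
    (cos_nonneg_of_mem_Icc ⟨by linarith [hy.1, pi_pos], hy.2⟩) two_ne_zero

theorem cos_sq_image_Ioo : (fun x => cos x ^ 2) '' Set.Ioo 0 (π / 2) = Set.Ioo 0 1 := by
  rw [ContinuousOn.image_Ioo_of_strictAntiOn (by positivity) (by fun_prop) strictAntiOn_cos_sq]
  simp

namespace TMap

variable {m : ℕ}

theorem apply_eq (φ : Fin m → ℝ) (k : Fin m) :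
    TMap m φ k = cos (φ k) ^ 2 * ∏ j ∈ Iio k, sin (φ j) ^ 2 := by
  rw [TMap, filter_gt_eq_Iio]

theorem eq_stickBreaking (φ : Fin m → ℝ) :
    TMap m φ = stickBreaking fun k => cos (φ k) ^ 2 := by
  funext k
  simp only [apply_eq, stickBreaking, sin_sq]

theorem eq_stickBreaking_comp : TMap m = stickBreaking ∘ Pi.map fun _ x => cos x ^ 2 :=
  funext eq_stickBreaking

theorem image_univ_pi_Ioo :
    TMap m '' Set.univ.pi (fun _ => Set.Ioo 0 (π / 2)) = {l | (∀ i, 0 < l i) ∧ ∑ i, l i < 1} := by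
  rw [eq_stickBreaking_comp, Set.image_comp, Set.piMap_image_univ_pi]
  simp only [cos_sq_image_Ioo]
  exact stickBreaking_image_univ_pi_Ioo

theorem injOn_univ_pi_Ioo : Set.InjOn (TMap m) (Set.univ.pi fun _ => Set.Ioo 0 (π / 2)) := by
  rw [eq_stickBreaking_comp]
  refine injOn_stickBreaking.comp (fun φ hφ ψ hψ h => funext fun k => ?_) fun φ hφ k => ?_
  · exact strictAntiOn_cos_sq.injOn (Set.Ioo_subset_Icc_self (hφ k trivial))
      (Set.Ioo_subset_Icc_self (hψ k trivial)) (congrFun h k)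
  · have := cos_sq_image_Ioo ▸ Set.mem_image_of_mem (fun x => cos x ^ 2) (hφ k trivial)
    exact this.2.ne

theorem differentiable : Differentiable ℝ (TMap m) := by
  unfold TMap
  fun_prop

theorem det_fderiv (φ : Fin m → ℝ) :
    (fderiv ℝ (TMap m) φ).det =
      ∏ k, -(2 * (sin (φ k) * cos (φ k) * ∏ j ∈ Iio k, sin (φ j) ^ 2)) := by
  rw [det_fderiv_eq_prod_deriv_of_triangular differentiable.differentiableAt]
  · refine prod_congr rfl fun k _ => ?_
    have hk : (fun t => TMap m (update φ k t) k) =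
        fun t => cos t ^ 2 * ∏ j ∈ Iio k, sin (φ j) ^ 2 := by
      funext t
      rw [apply_eq, update_self]
      exact congrArg _ (prod_congr rfl fun j hj => by rw [update_of_ne (mem_Iio.mp hj).ne])
    rw [hk, (((hasDerivAt_cos (φ k)).fun_pow 2).mul_const _).deriv]
    ring
  · intro k j hkj t
    rw [apply_eq, apply_eq, update_of_ne hkj.ne]
    exact congrArg _ (prod_congr rfl fun i hi => by
      rw [update_of_ne ((mem_Iio.mp hi).trans hkj).ne])

theorem mul_one_sub_sum_Iic (φ : Fin m → ℝ) (k : Fin m) :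
    TMap m φ k * (1 - ∑ i ∈ Iic k, TMap m φ i) =
      (sin (φ k) * cos (φ k) * ∏ j ∈ Iio k, sin (φ j) ^ 2) ^ 2 := by
  rw [eq_stickBreaking, one_sub_sum_stickBreaking_of_isLowerSet _
    (by rw [coe_Iic]; exact isLowerSet_Iic k), ← Iio_insert, prod_insert notMem_Iio_self,
    stickBreaking]
  simp only [← sin_sq]
  ring

noncomputable def density (m : ℕ) (l : Fin m → ℝ) : ℝ :=
  (π ^ m)⁻¹ * ∏ k : Fin m, 1 / √(l k * (1 - ∑ i ∈ univ.filter (fun i : Fin m => i ≤ k), l i))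

theorem abs_det_fderiv_mul_density {φ : Fin m → ℝ}
    (hφ : φ ∈ Set.univ.pi fun _ => Set.Ioo 0 (π / 2)) :
    |(fderiv ℝ (TMap m) φ).det| * density m (TMap m φ) = (2 / π) ^ m := by
  have hsin : ∀ j, 0 < sin (φ j) := fun j =>
    sin_pos_of_pos_of_lt_pi (hφ j trivial).1 ((hφ j trivial).2.trans (by linarith [pi_pos]))
  have hcos : ∀ j, 0 < cos (φ j) := fun j =>
    cos_pos_of_mem_Ioo ⟨by linarith [(hφ j trivial).1, pi_pos], (hφ j trivial).2⟩
  have hw : ∀ k, 0 < sin (φ k) * cos (φ k) * ∏ j ∈ Iio k, sin (φ j) ^ 2 := fun k =>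
    mul_pos (mul_pos (hsin k) (hcos k)) (prod_pos fun j _ => pow_pos (hsin j) 2)
  have hpos := prod_pos fun k (_ : k ∈ univ) => hw k
  simp only [density, det_fderiv, abs_prod, abs_neg, abs_of_pos (mul_pos two_pos (hw _)),
    filter_ge_eq_Iic, mul_one_sub_sum_Iic, sqrt_sq (hw _).le, one_div, prod_inv_distrib]
  rw [prod_mul_distrib, prod_const, card_univ, Fintype.card_fin, div_pow]
  field_simp

end TMap

theorem map_TMap_smul_volume_univ_pi_Ioo (m : ℕ) :
    Measure.map (TMap m)
        (ENNReal.ofReal ((2 / π) ^ m) • volume.restrict (Set.univ.pi fun _ => Set.Ioo 0 (π / 2))) =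
      volume.withDensity ({l | (∀ i, 0 < l i) ∧ ∑ i, l i < 1}.indicator
        fun l => ENNReal.ofReal (TMap.density m l)) := by
  have hT : Measurable (TMap m) := TMap.differentiable.continuous.measurable
  have hΩ : MeasurableSet {l : Fin m → ℝ | (∀ i, 0 < l i) ∧ ∑ i, l i < 1} := by measurability
  ext A hA
  have hs : MeasurableSet (TMap m ⁻¹' A ∩ Set.univ.pi fun _ => Set.Ioo 0 (π / 2)) :=
    (hT hA).inter (MeasurableSet.univ_pi fun _ => measurableSet_Ioo)
  rw [Measure.map_apply hT hA, Measure.smul_apply, Measure.restrict_apply (hT hA),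
    withDensity_indicator hΩ, withDensity_apply _ hA, Measure.restrict_restrict hA,
    ← TMap.image_univ_pi_Ioo, ← Set.image_preimage_inter,
    lintegral_image_eq_lintegral_abs_det_fderiv_mul volume hs
      (fun φ _ => (TMap.differentiable φ).hasFDerivAt.hasFDerivWithinAt)
      (TMap.injOn_univ_pi_Ioo.mono Set.inter_subset_right),
    setLIntegral_congr_fun hs fun φ hφ => by
      rw [← ENNReal.ofReal_mul (abs_nonneg _), TMap.abs_det_fderiv_mul_density hφ.2],
    setLIntegral_const, smul_eq_mul]

theorem stmt_5_general (n : ℕ) :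
    Measure.map (TMap (n - 1))
        (ENNReal.ofReal ((2 / Real.pi) ^ (n - 1)) •
          volume.restrict (Set.univ.pi fun _ : Fin (n - 1) => Set.Ioo 0 (Real.pi / 2))) =
      volume.withDensity (fun lam : Fin (n - 1) → ℝ =>
        if (∀ i, 0 < lam i) ∧ ∑ i, lam i < 1 then
          ENNReal.ofReal ((Real.pi ^ (n - 1))⁻¹ *
            ∏ k : Fin (n - 1),
              1 / Real.sqrt (lam k *
                (1 - ∑ i ∈ Finset.univ.filter (fun i : Fin (n - 1) => i ≤ k), lam i)))
        else 0) := by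
  rw [map_TMap_smul_volume_univ_pi_Ioo]
  congr 1
  funext l
  simp only [Set.indicator_apply, Set.mem_ofPred_eq, TMap.density]

/-- The pushforward under `TMap (n-1)` of the uniform probability measure
on `(0, π/2)^{n-1}` (density `(2/π)^{n-1}` w.r.t. Lebesgue measure) is absolutely
continuous w.r.t. Lebesgue measure on `ℝ^{n-1}` with density
`π^{-(n-1)} ∏_k 1/√(λ_k (1 - ∑_{i≤k} λ_i))` on the region
`{λ : λ_i > 0 ∀i, ∑ λ_i < 1}` and `0` outside. -/
theorem stmt_5 (n : ℕ) (hn : 2 ≤ n) :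
    Measure.map (TMap (n - 1))
        (ENNReal.ofReal ((2 / Real.pi) ^ (n - 1)) •
          volume.restrict (Set.univ.pi fun _ : Fin (n - 1) => Set.Ioo 0 (Real.pi / 2))) =
      volume.withDensity (fun lam : Fin (n - 1) → ℝ =>
        if (∀ i, 0 < lam i) ∧ ∑ i, lam i < 1 then
          ENNReal.ofReal ((Real.pi ^ (n - 1))⁻¹ *
            ∏ k : Fin (n - 1),
              1 / Real.sqrt (lam k *
                (1 - ∑ i ∈ Finset.univ.filter (fun i : Fin (n - 1) => i ≤ k), lam i)))
        else 0) :=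
  stmt_5_general n
end

section
/- For every s with 0 ≤ s < 1, the improper integral A(s) = ∫₀^{1−s} (λ · ln λ)/√(λ(1 − s − λ)) dλ converges and equals π·(1−s)·( −(ln 2 − 1/2) + (1/2)·ln(1−s) ). -/
/-!
Substituting `l = c sin² θ` with `c = 1 - s` turns `√(l (c - l))` into `c sin θ cos θ` and `dl` into
`2c sin θ cos θ dθ`, so the integral becomes `∫₀^{π/2} (2c log c sin² θ + 4c sin² θ log sin θ) dθ`.
Writing `sin² θ = (1 - cos 2θ) / 2`, the second part reduces to Euler's integral
`∫₀^{π/2} log sin = -(π/2) log 2` and to `∫₀^{π/2} cos 2θ log sin θ = -π/4`, whose integrand has the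
elementary antiderivative `cos θ sin θ log sin θ - θ/2 - sin 2θ / 4`.
-/

open MeasureTheory Real Set intervalIntegral

lemma intervalIntegrable_continuous_mul_log_sin {g : ℝ → ℝ} (hg : Continuous g) (a b : ℝ) :
    IntervalIntegrable (fun x => g x * log (sin x)) volume a b :=
  intervalIntegrable_log_sin.continuousOn_mul hg.continuousOn

lemma hasDerivAt_cos_mul_sin_mul_log_sin {x : ℝ} (hx : sin x ≠ 0) :
    HasDerivAt (fun y => cos y * (sin y * log (sin y)) - y / 2 - sin (2 * y) / 4)
      (cos (2 * x) * log (sin x)) x := by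
  have h := (((hasDerivAt_cos x).mul ((hasDerivAt_mul_log hx).comp x (hasDerivAt_sin x))).sub
    ((hasDerivAt_id x).div_const 2)).sub
    (((hasDerivAt_sin (2 * x)).comp x ((hasDerivAt_id x).const_mul 2)).div_const 4)
  refine h.congr_deriv ?_
  simp only [Function.comp_apply]
  linear_combination -(log (sin x) + 1 / 2) * cos_two_mul x - log (sin x) * sin_sq_add_cos_sq x

theorem integral_cos_two_mul_mul_log_sin :
    ∫ x in 0..π / 2, cos (2 * x) * log (sin x) = -(π / 4) := by
  rw [integral_eq_sub_of_hasDerivAt_of_le (by positivity) (by fun_prop)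
    (fun x hx => hasDerivAt_cos_mul_sin_mul_log_sin
      (sin_pos_of_pos_of_lt_pi hx.1 (by linarith [hx.2, pi_pos])).ne')
    (intervalIntegrable_continuous_mul_log_sin (by fun_prop) _ _)]
  simp only [cos_pi_div_two, sin_pi_div_two, cos_zero, sin_zero, show 2 * (π / 2) = π by ring,
    sin_pi, mul_zero, zero_div, sub_zero]
  ring

theorem integral_sin_sq_mul_log_sin :
    ∫ x in 0..π / 2, sin x ^ 2 * log (sin x) = π / 8 - π / 4 * log 2 := by
  have hsplit : (fun x => sin x ^ 2 * log (sin x))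
      = fun x => 2⁻¹ * log (sin x) - 2⁻¹ * (cos (2 * x) * log (sin x)) := by
    ext x
    rw [sin_sq_eq_half_sub]
    ring
  rw [hsplit, integral_sub (intervalIntegrable_continuous_mul_log_sin continuous_const _ _)
    ((intervalIntegrable_continuous_mul_log_sin (by fun_prop) _ _).const_mul _),
    intervalIntegral.integral_const_mul, intervalIntegral.integral_const_mul,
    integral_log_sin_zero_pi_div_two, integral_cos_two_mul_mul_log_sin]
  ring

section SinSqSubstitution

variable {c : ℝ}

lemma hasDerivAt_const_mul_sin_sq (c θ : ℝ) :
    HasDerivAt (fun θ => c * sin θ ^ 2) (2 * c * sin θ * cos θ) θ := by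
  refine (((hasDerivAt_sin θ).fun_pow 2).const_mul c).congr_deriv ?_
  ring

lemma strictMonoOn_const_mul_sin_sq (hc : 0 < c) :
    StrictMonoOn (fun θ => c * sin θ ^ 2) (Icc 0 (π / 2)) := by
  intro x hx y hy hxy
  have hsin : sin x < sin y := strictMonoOn_sin
    ⟨by linarith [hx.1, pi_pos], hx.2⟩ ⟨by linarith [hy.1, pi_pos], hy.2⟩ hxy
  have hx0 : 0 ≤ sin x := sin_nonneg_of_nonneg_of_le_pi hx.1 (by linarith [hx.2, pi_pos])
  dsimp only
  gcongr

lemma image_const_mul_sin_sq_Ioo (hc : 0 < c) :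
    (fun θ => c * sin θ ^ 2) '' Ioo 0 (π / 2) = Ioo 0 c := by
  have hmono := strictMonoOn_const_mul_sin_sq hc
  apply Subset.antisymm
  · rintro _ ⟨θ, hθ, rfl⟩
    have h0 := hmono (left_mem_Icc.2 pi_div_two_pos.le) (Ioo_subset_Icc_self hθ) hθ.1
    have h1 := hmono (Ioo_subset_Icc_self hθ) (right_mem_Icc.2 pi_div_two_pos.le) hθ.2
    simpa using And.intro h0 h1
  · have h := intermediate_value_Ioo pi_div_two_pos.le (f := fun θ : ℝ => c * sin θ ^ 2)
      (by fun_prop)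
    rw [sin_zero, sin_pi_div_two] at h
    norm_num at h
    exact h

lemma abs_deriv_const_mul_sin_sq_eqOn (hc : 0 < c) :
    EqOn (fun θ => |2 * c * sin θ * cos θ|) (fun θ => 2 * c * sin θ * cos θ) (Ioo 0 (π / 2)) :=
  fun θ hθ => abs_of_pos <| by
    have := sin_pos_of_pos_of_lt_pi hθ.1 (by linarith [hθ.2, pi_pos])
    have := cos_pos_of_mem_Ioo ⟨by linarith [hθ.1, pi_pos], hθ.2⟩
    positivity

variable {E : Type*} [NormedAddCommGroup E] [NormedSpace ℝ E]

theorem integrableOn_Ioo_iff_sin_sq_subst (hc : 0 < c) (g : ℝ → E) :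
    IntegrableOn g (Ioo 0 c) ↔
      IntegrableOn (fun θ => (2 * c * sin θ * cos θ) • g (c * sin θ ^ 2)) (Ioo 0 (π / 2)) := by
  rw [← image_const_mul_sin_sq_Ioo hc, integrableOn_image_iff_integrableOn_abs_deriv_smul
    measurableSet_Ioo (fun θ _ => (hasDerivAt_const_mul_sin_sq c θ).hasDerivWithinAt)
    (strictMonoOn_const_mul_sin_sq hc |>.mono Ioo_subset_Icc_self).injOn]
  exact integrableOn_congr_fun
    (fun θ hθ => by simp only [abs_deriv_const_mul_sin_sq_eqOn hc hθ]) measurableSet_Ioo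

theorem setIntegral_Ioo_eq_sin_sq_subst [CompleteSpace E] (hc : 0 < c) (g : ℝ → E) :
    ∫ l in Ioo 0 c, g l = ∫ θ in Ioo 0 (π / 2), (2 * c * sin θ * cos θ) • g (c * sin θ ^ 2) := by
  rw [← image_const_mul_sin_sq_Ioo hc, integral_image_eq_integral_abs_deriv_smul
    measurableSet_Ioo (fun θ _ => (hasDerivAt_const_mul_sin_sq c θ).hasDerivWithinAt)
    (strictMonoOn_const_mul_sin_sq hc |>.mono Ioo_subset_Icc_self).injOn]
  exact setIntegral_congr_fun measurableSet_Ioo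
    (fun θ hθ => by simp only [abs_deriv_const_mul_sin_sq_eqOn hc hθ])

end SinSqSubstitution

lemma sin_sq_subst_mul_log_div_sqrt {c θ : ℝ} (hc : 0 < c) (hθ : θ ∈ Ioo 0 (π / 2)) :
    (2 * c * sin θ * cos θ) • (c * sin θ ^ 2 * log (c * sin θ ^ 2)
        / √(c * sin θ ^ 2 * (c - c * sin θ ^ 2)))
      = 2 * c * log c * sin θ ^ 2 + 4 * c * (sin θ ^ 2 * log (sin θ)) := by
  have hsin : 0 < sin θ := sin_pos_of_pos_of_lt_pi hθ.1 (by linarith [hθ.2, pi_pos])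
  have hcos : 0 < cos θ := cos_pos_of_mem_Ioo ⟨by linarith [hθ.1, pi_pos], hθ.2⟩
  have hsqrt : √(c * sin θ ^ 2 * (c - c * sin θ ^ 2)) = c * sin θ * cos θ := by
    rw [show c * sin θ ^ 2 * (c - c * sin θ ^ 2) = (c * sin θ * cos θ) ^ 2 by
      linear_combination -(c ^ 2 * sin θ ^ 2) * sin_sq_add_cos_sq θ, sqrt_sq (by positivity)]
  rw [hsqrt, log_mul hc.ne' (by positivity), log_pow, smul_eq_mul]
  field_simp
  ring

theorem integrableOn_and_setIntegral_mul_log_div_sqrt {c : ℝ} (hc : 0 < c) :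
    IntegrableOn (fun l => l * log l / √(l * (c - l))) (Ioo 0 c) ∧
      ∫ l in Ioo 0 c, l * log l / √(l * (c - l))
        = π * c * (-(log 2 - 1 / 2) + 1 / 2 * log c) := by
  have hsubst : EqOn
      (fun θ => (2 * c * sin θ * cos θ) • (c * sin θ ^ 2 * log (c * sin θ ^ 2)
        / √(c * sin θ ^ 2 * (c - c * sin θ ^ 2))))
      (fun θ => 2 * c * log c * sin θ ^ 2 + 4 * c * (sin θ ^ 2 * log (sin θ)))
      (Ioo 0 (π / 2)) :=
    fun θ hθ => sin_sq_subst_mul_log_div_sqrt hc hθ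
  have hint₁ : IntervalIntegrable (fun θ => 2 * c * log c * sin θ ^ 2) volume 0 (π / 2) :=
    (by fun_prop : Continuous fun θ => 2 * c * log c * sin θ ^ 2).intervalIntegrable _ _
  have hint₂ := (intervalIntegrable_continuous_mul_log_sin
    (g := fun θ => sin θ ^ 2) (by fun_prop) 0 (π / 2)).const_mul (4 * c)
  constructor
  · rw [integrableOn_Ioo_iff_sin_sq_subst hc]
    refine IntegrableOn.congr_fun ?_ hsubst.symm measurableSet_Ioo
    exact ((intervalIntegrable_iff_integrableOn_Ioc_of_le pi_div_two_pos.le).1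
      (hint₁.add hint₂)).mono_set Ioo_subset_Ioc_self
  · rw [setIntegral_Ioo_eq_sin_sq_subst hc, setIntegral_congr_fun measurableSet_Ioo hsubst,
      ← integral_Ioc_eq_integral_Ioo, ← integral_of_le pi_div_two_pos.le,
      integral_add hint₁ hint₂, intervalIntegral.integral_const_mul,
      intervalIntegral.integral_const_mul, integral_sin_sq, integral_sin_sq_mul_log_sin]
    simp only [sin_zero, cos_zero, sin_pi_div_two, cos_pi_div_two, mul_zero, mul_one, sub_self,
      zero_add, sub_zero]
    ring

theorem stmt_9_general (s : ℝ) (hs1 : s < 1) :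
    IntegrableOn (fun l : ℝ => l * Real.log l / Real.sqrt (l * (1 - s - l)))
      (Set.Ioo 0 (1 - s)) volume ∧
    (∫ l in Set.Ioo (0 : ℝ) (1 - s), l * Real.log l / Real.sqrt (l * (1 - s - l)))
      = Real.pi * (1 - s) * (-(Real.log 2 - 1 / 2) + 1 / 2 * Real.log (1 - s)) :=
  integrableOn_and_setIntegral_mul_log_div_sqrt (sub_pos.2 hs1)

/-- For `0 ≤ s < 1`, the improper integral
`A(s) = ∫₀^{1−s} λ ln λ / √(λ(1−s−λ)) dλ` converges and equals
`π(1−s)(−(ln 2 − 1/2) + (1/2) ln(1−s))`. -/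
theorem stmt_9 (s : ℝ) (hs0 : 0 ≤ s) (hs1 : s < 1) :
    IntegrableOn (fun l : ℝ => l * Real.log l / Real.sqrt (l * (1 - s - l)))
      (Set.Ioo 0 (1 - s)) volume ∧
    (∫ l in Set.Ioo (0 : ℝ) (1 - s), l * Real.log l / Real.sqrt (l * (1 - s - l)))
      = Real.pi * (1 - s) * (-(Real.log 2 - 1 / 2) + 1 / 2 * Real.log (1 - s)) :=
  stmt_9_general s hs1
end

section
/- Let n ≥ 2, let Φ₁, …, Φ_{n-1} be independent random variables uniformly distributed on [0, π/2], and for 1 ≤ j ≤ n−1 define Λ_j = cos²(Φ_j)·∏_{i=1}^{j-1} sin²(Φ_i) and F_j = E[Λ_j · ln Λ_j]. Let a = ln 2 − 1/2. Then for every j with 0 ≤ j and j+1 ≤ n−1, the closed form F_{j+1} = −(j+1)·a / 2^j holds. -/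
open MeasureTheory Real

/-- The uniform probability measure on the interval `[0, π/2]`. -/
noncomputable def uniformHalfPi : Measure ℝ :=
  ENNReal.ofReal (2 / Real.pi) • volume.restrict (Set.Icc 0 (Real.pi / 2))

/-- The eigenvalue `Λ` with 0-based index `j`:
`Λ_j(φ) = cos²(φ j) ∏_{i<j} sin²(φ i)`. -/
noncomputable def Lam (m : ℕ) (j : Fin m) (φ : Fin m → ℝ) : ℝ :=
  Real.cos (φ j) ^ 2 * ∏ i ∈ Finset.univ.filter (fun i : Fin m => i < j), Real.sin (φ i) ^ 2

/-- The expectation `F_j = E[Λ_j ln Λ_j]` (0-based index `j`) with respect to the product of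
uniform measures on `[0, π/2]`, modelling independent uniform spherical coordinates. -/
noncomputable def Fexp (m : ℕ) (j : Fin m) : ℝ :=
  ∫ φ : Fin m → ℝ, Lam m j φ * Real.log (Lam m j φ)
    ∂(Measure.pi fun _ : Fin m => uniformHalfPi)


/-!
`Λ_j` is a product of functions of the independent coordinates: `cos² φ_j`, `sin² φ_k` for
`k < j`, and `1` for `k > j`. Since `(∏ g_k) log (∏ g_k) = ∑_i g_i log g_i ∏_{k ≠ i} g_k`,
independence gives `F_j = ∑_i E[g_i log g_i] ∏_{k ≠ i} E[g_k]`. Under the uniform law on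
`[0, π/2]`, `E[cos²] = E[sin²] = 1/2` and `E[cos² log cos²] = E[sin² log sin²] = 1/2 - log 2`,
the latter from `∫₀^{π/2} log cos = -(π/2) log 2`; the `j + 1` nonzero terms each equal `-a / 2^j`.
-/

open Finset

section MulLogProd

variable {ι : Type*} [Fintype ι] [DecidableEq ι]

lemma prod_ite_eq_mul_prod_erase {M : Type*} [CommMonoid M] (a b : ι → M) (i : ι) :
    ∏ k, (if k = i then a k else b k) = a i * ∏ k ∈ univ.erase i, b k := by
  rw [← mul_prod_erase univ _ (mem_univ i), if_pos rfl]
  congr 1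
  exact prod_congr rfl fun k hk => if_neg (ne_of_mem_erase hk)

/-- `log` is additive on nonzero reals of any sign, and both sides vanish when a factor does. -/
lemma prod_mul_log_prod (g : ι → ℝ) :
    (∏ k, g k) * log (∏ k, g k) = ∑ i, g i * log (g i) * ∏ k ∈ univ.erase i, g k := by
  by_cases hg : ∀ k, g k ≠ 0
  · rw [log_prod fun k _ => hg k, mul_sum]
    refine sum_congr rfl fun i _ => ?_
    rw [← mul_prod_erase univ g (mem_univ i)]
    ring
  · obtain ⟨k₀, hk₀⟩ : ∃ k, g k = 0 := by simpa using hg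
    rw [prod_eq_zero (mem_univ k₀) hk₀, zero_mul]
    refine (sum_eq_zero fun i _ => ?_).symm
    by_cases hi : i = k₀
    · simp [hi, hk₀]
    · rw [prod_eq_zero (mem_erase.2 ⟨Ne.symm hi, mem_univ k₀⟩) hk₀, mul_zero]

variable {E : ι → Type*} [∀ i, MeasurableSpace (E i)] {μ : ∀ i, Measure (E i)}
  [∀ i, SigmaFinite (μ i)]

theorem integral_prod_mul_log_prod {f : ∀ i, E i → ℝ} (hf : ∀ i, Integrable (f i) (μ i))
    (hf_log : ∀ i, Integrable (fun y => f i y * log (f i y)) (μ i)) :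
    ∫ x, (∏ i, f i (x i)) * log (∏ i, f i (x i)) ∂Measure.pi μ =
      ∑ i, (∫ y, f i y * log (f i y) ∂μ i) * ∏ k ∈ univ.erase i, ∫ y, f k y ∂μ k := by
  set g : ι → ∀ k, E k → ℝ := fun i k y => if k = i then f k y * log (f k y) else f k y
  have hg : ∀ x : ∀ k, E k, (∏ i, f i (x i)) * log (∏ i, f i (x i)) = ∑ i, ∏ k, g i k (x k) :=
    fun x => by simp only [g, prod_mul_log_prod, prod_ite_eq_mul_prod_erase]
  have hg_int : ∀ i k, Integrable (g i k) (μ k) := fun i k => by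
    by_cases hk : k = i
    · simpa only [g, if_pos hk] using hf_log k
    · simpa only [g, if_neg hk] using hf k
  simp only [hg]
  rw [integral_finsetSum _ fun i _ => Integrable.fintype_prod_dep (hg_int i)]
  refine sum_congr rfl fun i _ => ?_
  rw [integral_fintype_prod_eq_prod, ← prod_ite_eq_mul_prod_erase
    (fun k => ∫ y, f k y * log (f k y) ∂μ k) (fun k => ∫ y, f k y ∂μ k)]
  exact prod_congr rfl fun k _ => by simp only [g]; split_ifs <;> rfl

end MulLogProd

section TrigIntegrals

open intervalIntegral

lemma integral_comp_sin_eq_integral_comp_cos (g : ℝ → ℝ) :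
    ∫ x in 0..π / 2, g (sin x) = ∫ x in 0..π / 2, g (cos x) := by
  simpa [← cos_pi_div_two_sub] using
    integral_comp_sub_left (a := 0) (b := π / 2) (fun x => g (cos x)) (π / 2)

/-- The derivative of `sin x · cos x log (cos x)`, which vanishes at both ends of `[0, π/2]`,
trades `cos x ^ 2 log (cos x)` for `log (cos x)` and `sin x ^ 2`, whose integrals are known. -/
theorem integral_cos_sq_mul_log_cos_sq :
    ∫ x in 0..π / 2, cos x ^ 2 * log (cos x ^ 2) = π / 4 - π / 2 * log 2 := by
  set G : ℝ → ℝ := fun x => sin x * (cos x * log (cos x))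
  set G' : ℝ → ℝ := fun x => (cos x ^ 2 - sin x ^ 2) * log (cos x) - sin x ^ 2
  have hG : ∀ x ∈ Set.Ioo 0 (π / 2), HasDerivAt G (G' x) x := fun x hx => by
    have hcos : cos x ≠ 0 := (cos_pos_of_mem_Ioo ⟨by linarith [hx.1, pi_pos], hx.2⟩).ne'
    exact ((hasDerivAt_sin x).mul ((hasDerivAt_mul_log hcos).comp x (hasDerivAt_cos x))).congr_deriv
      (by simp only [G', Function.comp_apply]; ring)
  have hlog : IntervalIntegrable (fun x => log (cos x)) volume 0 (π / 2) :=
    intervalIntegrable_log_cos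
  have hsin_sq : IntervalIntegrable (fun x => sin x ^ 2) volume 0 (π / 2) :=
    (continuous_sin.pow 2).intervalIntegrable _ _
  have hG'_int : IntervalIntegrable G' volume 0 (π / 2) :=
    (hlog.continuousOn_mul (by fun_prop)).sub hsin_sq
  have hG'_zero : ∫ x in 0..π / 2, G' x = 0 := by
    rw [integral_eq_sub_of_hasDerivAt_of_le (by positivity)
      (continuous_sin.mul (continuous_mul_log.comp continuous_cos)).continuousOn hG hG'_int]
    simp
  have hsplit : ∀ x, cos x ^ 2 * log (cos x ^ 2) = G' x + log (cos x) + sin x ^ 2 := fun x => by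
    rw [log_pow]
    simp only [G']
    linear_combination log (cos x) * sin_sq_add_cos_sq x
  simp only [hsplit]
  rw [integral_add (hG'_int.add hlog) hsin_sq, integral_add hG'_int hlog, hG'_zero,
    ← integral_comp_sin_eq_integral_comp_cos log, integral_log_sin_zero_pi_div_two,
    integral_sin_sq]
  simp
  ring

end TrigIntegrals

section UniformHalfPi

instance : IsProbabilityMeasure uniformHalfPi := by
  constructor
  rw [uniformHalfPi, Measure.smul_apply, Measure.restrict_apply_univ, volume_Icc, smul_eq_mul,
    ← ENNReal.ofReal_mul (by positivity)]
  field_simp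
  simp

lemma integral_uniformHalfPi (g : ℝ → ℝ) :
    ∫ x, g x ∂uniformHalfPi = 2 / π * ∫ x in 0..π / 2, g x := by
  rw [uniformHalfPi, integral_smul_measure, ENNReal.toReal_ofReal (by positivity),
    intervalIntegral.integral_of_le (by positivity), ← integral_Icc_eq_integral_Ioc, smul_eq_mul]

lemma Continuous.integrable_uniformHalfPi {g : ℝ → ℝ} (hg : Continuous g) :
    Integrable g uniformHalfPi :=
  hg.integrableOn_Icc.smul_measure ENNReal.ofReal_ne_top

lemma integral_cos_sq_uniformHalfPi : ∫ x, cos x ^ 2 ∂uniformHalfPi = 1 / 2 := by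
  rw [integral_uniformHalfPi, integral_cos_sq]
  field_simp
  simp

lemma integral_sin_sq_uniformHalfPi : ∫ x, sin x ^ 2 ∂uniformHalfPi = 1 / 2 := by
  rw [integral_uniformHalfPi, integral_comp_sin_eq_integral_comp_cos (· ^ 2),
    ← integral_uniformHalfPi (cos · ^ 2), integral_cos_sq_uniformHalfPi]

lemma integral_cos_sq_mul_log_cos_sq_uniformHalfPi :
    ∫ x, cos x ^ 2 * log (cos x ^ 2) ∂uniformHalfPi = 1 / 2 - log 2 := by
  rw [integral_uniformHalfPi, integral_cos_sq_mul_log_cos_sq]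
  field_simp
  ring

lemma integral_sin_sq_mul_log_sin_sq_uniformHalfPi :
    ∫ x, sin x ^ 2 * log (sin x ^ 2) ∂uniformHalfPi = 1 / 2 - log 2 := by
  rw [integral_uniformHalfPi, integral_comp_sin_eq_integral_comp_cos (fun t => t ^ 2 * log (t ^ 2)),
    ← integral_uniformHalfPi (fun x => cos x ^ 2 * log (cos x ^ 2)),
    integral_cos_sq_mul_log_cos_sq_uniformHalfPi]

end UniformHalfPi

section LamFactor

variable {m : ℕ}

noncomputable def lamFactor (j k : Fin m) (x : ℝ) : ℝ :=
  if k = j then cos x ^ 2 else if k < j then sin x ^ 2 else 1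

lemma Lam_eq_prod_lamFactor (j : Fin m) (φ : Fin m → ℝ) :
    Lam m j φ = ∏ k, lamFactor j k (φ k) := by
  simp only [Lam, lamFactor]
  rw [prod_ite_eq_mul_prod_erase (fun k => cos (φ k) ^ 2), prod_ite, prod_const_one, mul_one,
    filter_erase, erase_eq_of_notMem (by simp)]

lemma continuous_lamFactor (j k : Fin m) : Continuous (lamFactor j k) := by
  unfold lamFactor
  split_ifs <;> fun_prop

lemma integral_lamFactor (j k : Fin m) :
    ∫ x, lamFactor j k x ∂uniformHalfPi = if k ≤ j then 1 / 2 else 1 := by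
  rcases lt_trichotomy k j with hkj | rfl | hjk
  · simp [lamFactor, hkj, hkj.ne, hkj.le, integral_sin_sq_uniformHalfPi]
  · simp [lamFactor, integral_cos_sq_uniformHalfPi]
  · simp [lamFactor, hjk.ne', hjk.not_gt, hjk.not_ge]

lemma integral_lamFactor_mul_log (j k : Fin m) :
    ∫ x, lamFactor j k x * log (lamFactor j k x) ∂uniformHalfPi =
      if k ≤ j then 1 / 2 - log 2 else 0 := by
  rcases lt_trichotomy k j with hkj | rfl | hjk
  · simp [lamFactor, hkj, hkj.ne, hkj.le, -log_pow, integral_sin_sq_mul_log_sin_sq_uniformHalfPi]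
  · simp [lamFactor, -log_pow, integral_cos_sq_mul_log_cos_sq_uniformHalfPi]
  · simp [lamFactor, hjk.ne', hjk.not_gt, hjk.not_ge]

lemma sum_ite_mul_prod_erase_ite (j : Fin m) (b c : ℝ) :
    ∑ i, (if i ≤ j then c else 0) * ∏ k ∈ univ.erase i, (if k ≤ j then b else 1) =
      ((j : ℕ) + 1 : ℝ) * c * b ^ (j : ℕ) := by
  have hcard : ∀ i ≤ j, #{k ∈ univ.erase i | k ≤ j} = j := fun i hi => by
    rw [filter_erase, card_erase_of_mem (by simpa), filter_ge_eq_Iic, Fin.card_Iic,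
      Nat.add_sub_cancel]
  calc ∑ i, (if i ≤ j then c else 0) * ∏ k ∈ univ.erase i, (if k ≤ j then b else 1)
      = ∑ i ∈ Iic j, c * b ^ (j : ℕ) := by
        rw [← filter_ge_eq_Iic, sum_filter]
        refine sum_congr rfl fun i _ => ?_
        split_ifs with hi
        · rw [prod_ite, prod_const, prod_const_one, mul_one, hcard i hi]
        · rw [zero_mul]
    _ = ((j : ℕ) + 1 : ℝ) * c * b ^ (j : ℕ) := by
        rw [sum_const, Fin.card_Iic, nsmul_eq_mul]
        push_cast
        ring

theorem Fexp_eq (j : Fin m) :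
    Fexp m j = -(((j : ℕ) + 1 : ℝ) * (log 2 - 1 / 2)) / 2 ^ (j : ℕ) := by
  have h := integral_prod_mul_log_prod (μ := fun _ => uniformHalfPi)
    (fun k => (continuous_lamFactor j k).integrable_uniformHalfPi)
    (fun k => ((continuous_lamFactor j k).mul_log).integrable_uniformHalfPi)
  simp only [integral_lamFactor, integral_lamFactor_mul_log, ← Lam_eq_prod_lamFactor] at h
  rw [Fexp, h, sum_ite_mul_prod_erase_ite, one_div_pow]
  field_simp
  ring

end LamFactor

/-- For `0 ≤ j` with `j + 1 ≤ n − 1`, the closed form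
`F_{j+1} = −(j+1)·a / 2^j` holds, where `a = ln 2 − 1/2`.  In 0-based indices, the paper's
`F_{j+1}` is `Fexp (n-1) ⟨j, _⟩`. -/
theorem stmt_12 (n : ℕ) (j : ℕ) (hj : j + 1 ≤ n - 1) :
    Fexp (n - 1) ⟨j, by omega⟩ =
      -((j + 1 : ℝ) * (Real.log 2 - 1 / 2)) / 2 ^ j :=
  Fexp_eq _
end
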